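/- For any ρ₁ ≤ ρ₂ in Θ₀ and any partition B of D_n, the matrix Δ^B(ρ₁,ρ₂) = L^B_{n,m}(ρ₂) − L^B_{n,m}(ρ₁) is symmetric positive semidefinite; equivalently, the map ρ ↦ L^B_{n,m}(ρ) is monotone nondecreasing on Θ₀ in the positive semidefinite (Loewner) order. (Monotonicity claim established in Eq. (B.8) of the proof of Lemma B.3.) -/

import Mathlib

open MeasureTheory ProbabilityTheory Filter Matrix BoundedContinuousFunction
open scoped BigOperators ENNReal NNReal Topology Classical

noncomputable section

/-- Points of `ℝ^d` with the Euclidean structure. -/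
abbrev Pt (d : ℕ) := EuclideanSpace ℝ (Fin d)

/-- `N = ⌊n^(1/d)⌋`. -/
def Nof (d n : ℕ) : ℕ := Nat.floor ((n : ℝ) ^ ((1 : ℝ) / (d : ℝ)))

/-- Quasi-uniformity of the `n`-point sampling set `D ⊂ ℝ^d`: for every `s ∈ D` there is an
enumeration of `D \ {s}` which is monotone in the distance to `s` (so that its `i`-th element is
the `i`-th nearest neighbour of `s`), whose distances obey the two-sided bound
`Cmin (i/n)^{1/d} ≤ r_{s,i} ≤ Cmax (i/n)^{1/d}`. -/
def QuasiUniform (d n : ℕ) (Cmin Cmax : ℝ) (D : Finset (Pt d)) : Prop :=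
  D.card = n ∧
  ∀ s ∈ D, ∃ g : Fin (n - 1) → Pt d,
    (∀ i, g i ∈ D.erase s) ∧ Function.Injective g ∧
    (∀ t ∈ D.erase s, ∃ i, g i = t) ∧
    (∀ i j : Fin (n - 1), i ≤ j → dist s (g i) ≤ dist s (g j)) ∧
    (∀ i : Fin (n - 1),
      Cmin * (((i : ℕ) + 1 : ℝ) / (n : ℝ)) ^ ((1 : ℝ) / (d : ℝ)) ≤ dist s (g i) ∧
      dist s (g i) ≤ Cmax * (((i : ℕ) + 1 : ℝ) / (n : ℝ)) ^ ((1 : ℝ) / (d : ℝ)))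

/-- Preconditioning neighbourhoods `nb` and coefficients `a` of order `m` for the set `D`:
each `N_m(s) = nb s` lies in `D` within distance `c₀/N` of `s`; the coefficients annihilate all
monomials `(t-s)^r` with `|r|₁ < m`, do not annihilate some monomial with `|r|₁ ≥ m`, and are
normalized in Euclidean norm. -/
def PrecondCoeffs (d m : ℕ) (c₀ : ℝ) (N : ℕ) (D : Finset (Pt d))
    (nb : Pt d → Finset (Pt d)) (a : Pt d → Pt d → ℝ) : Prop :=
  ∀ s ∈ D,
    nb s ⊆ D ∧
    (∀ t ∈ nb s, ‖t - s‖ ≤ c₀ / (N : ℝ)) ∧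
    (∀ r : Fin d → ℕ, (∑ j, r j) < m →
      (∑ t ∈ nb s, a s t * ∏ j, (t j - s j) ^ r j) = 0) ∧
    (∃ r : Fin d → ℕ, m ≤ (∑ j, r j) ∧
      (∑ t ∈ nb s, a s t * ∏ j, (t j - s j) ^ r j) ≠ 0) ∧
    (∑ t ∈ nb s, (a s t) ^ 2) = 1

/-- The Fourier filter `f^N_s(ω)` of the preconditioning coefficients. -/
def fN (d : ℕ) (ν : ℝ) (N : ℕ) (nb : Pt d → Finset (Pt d))
    (a : Pt d → Pt d → ℝ) (s ω : Pt d) : ℂ :=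
  ((‖ω‖ ^ (-(ν + (d : ℝ) / 2)) : ℝ) : ℂ) *
    ∑ t ∈ nb s, ((a s t : ℝ) : ℂ) *
      Complex.exp (Complex.I * ((inner ℝ ((N : ℝ) • ω) (t - s) : ℝ) : ℂ))

/-- `h_N(x) = (1 + (Nx)^{-2})^{-(ν + d/2)}`. -/
def hN (d : ℕ) (ν : ℝ) (N : ℕ) (x : ℝ) : ℝ :=
  (1 + ((N : ℝ) * x) ^ (-(2 : ℝ))) ^ (-(ν + (d : ℝ) / 2))

/-- The matrix `K_{n,m}(ρ)`, the `φ₀`-normalized covariance matrix of the preconditioned data,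
given through its spectral representation. -/
def Kmat {d : ℕ} (ν : ℝ) (N : ℕ) (D : Finset (Pt d))
    (nb : Pt d → Finset (Pt d)) (a : Pt d → Pt d → ℝ) (ρ : ℝ) :
    Matrix D D ℝ :=
  Matrix.of fun s t =>
    ρ ^ (-(2 * ν)) *
      (∫ (ω : Pt d),
        Complex.exp (Complex.I * ((inner ℝ ((t : Pt d) - (s : Pt d)) ω : ℝ) : ℂ)) *
          fN d ν N nb a (s : Pt d) ω * (starRingEnd ℂ) (fN d ν N nb a (t : Pt d) ω) *
          ((hN d ν N (ρ * ‖ω‖) : ℝ) : ℂ)).re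

/-- Block-diagonal restriction of a matrix along the partition determined by a labelling `bin`. -/
def bdiag {d : ℕ} {D : Finset (Pt d)} (bin : Pt d → ℕ) (A : Matrix D D ℝ) :
    Matrix D D ℝ :=
  Matrix.of fun s t => if bin (s : Pt d) = bin (t : Pt d) then A s t else 0

/-- `L_{n,m}(ρ) = ρ^{2ν} K_{n,m}(ρ)`. -/
def Lmat {d : ℕ} (ν : ℝ) (N : ℕ) (D : Finset (Pt d))
    (nb : Pt d → Finset (Pt d)) (a : Pt d → Pt d → ℝ) (ρ : ℝ) :
    Matrix D D ℝ :=
  ρ ^ (2 * ν) • Kmat ν N D nb a ρ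

/-- `K^B_{n,m}(ρ)`: the block-diagonal approximation of `K_{n,m}(ρ)`. -/
def KmatB {d : ℕ} (ν : ℝ) (N : ℕ) (D : Finset (Pt d))
    (nb : Pt d → Finset (Pt d)) (a : Pt d → Pt d → ℝ) (bin : Pt d → ℕ) (ρ : ℝ) :
    Matrix D D ℝ := bdiag bin (Kmat ν N D nb a ρ)

/-- `L^B_{n,m}(ρ) = ρ^{2ν} K^B_{n,m}(ρ)`. -/
def LmatB {d : ℕ} (ν : ℝ) (N : ℕ) (D : Finset (Pt d))
    (nb : Pt d → Finset (Pt d)) (a : Pt d → Pt d → ℝ) (bin : Pt d → ℕ) (ρ : ℝ) :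
    Matrix D D ℝ := bdiag bin (Lmat ν N D nb a ρ)

/-- Euclidean norm of a finite-dimensional real vector. -/
def eNorm {ι : Type*} [Fintype ι] (v : ι → ℝ) : ℝ := Real.sqrt (∑ i, (v i) ^ 2)

/-- Frobenius norm of a real matrix. -/
def frobNorm {ι : Type*} [Fintype ι] (A : Matrix ι ι ℝ) : ℝ :=
  Real.sqrt (∑ i, ∑ j, (A i j) ^ 2)

/-- The `ℓ² → ℓ²` operator (spectral) norm of a real matrix. -/
def opNorm {ι : Type*} [Fintype ι] (A : Matrix ι ι ℝ) : ℝ :=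
  sSup {c : ℝ | ∃ v : ι → ℝ, eNorm v ≤ 1 ∧ c = eNorm (A.mulVec v)}

/-- The nuclear norm (sum of singular values): trace of the psd square root of `Aᵀ A`. -/
def nucNorm {ι : Type*} [Fintype ι] [DecidableEq ι] (A : Matrix ι ι ℝ) : ℝ :=
  (let hA := Matrix.posSemidef_conjTranspose_mul_self A;
    (hA.1.eigenvectorUnitary.1 * diagonal ((RCLike.ofReal : ℝ → ℝ) ∘ Real.sqrt ∘ hA.1.eigenvalues) *
      (star hA.1.eigenvectorUnitary : Matrix ι ι ℝ))).trace

/-- The standard Gaussian product measure on `ι → ℝ`. -/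
def stdGaussianPi (ι : Type*) [Fintype ι] : Measure (ι → ℝ) :=
  Measure.pi fun _ => gaussianReal 0 1

end

/-! For `ρ > 0` the factor `ρ^{2ν}` cancels, and with `g_s(ω) = e^{-i⟨s,ω⟩} f^N_s(ω)` one gets
`L(ρ)_{st} = Re ∫ g_s(ω) conj (g_t(ω)) h_N(ρ‖ω‖) dω`. Hence
`xᵀ (L(ρ₂) - L(ρ₁)) x = ∫ |∑ₛ xₛ gₛ(ω)|² (h_N(ρ₂‖ω‖) - h_N(ρ₁‖ω‖)) dω ≥ 0` since `h_N` is
increasing; the integrals converge because `|g_s|² h_N(ρ‖ω‖) ≲ (1 + (Nρ‖ω‖)²)^{-(ν+d/2)}` and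
`2ν + d > d`. Keeping only the diagonal blocks is the Hadamard product with the pattern matrix
`[bin s = bin t]`, a submatrix of the identity, so it preserves semidefiniteness by Schur's
product theorem. -/

open Complex ComplexConjugate

theorem bdiag_sub {d : ℕ} {D : Finset (Pt d)} (bin : Pt d → ℕ) (A B : Matrix D D ℝ) :
    bdiag bin (A - B) = bdiag bin A - bdiag bin B := by
  ext s t
  by_cases h : bin s = bin t <;> simp [bdiag, h]

theorem bdiag_eq_hadamard {d : ℕ} {D : Finset (Pt d)} (bin : Pt d → ℕ) (A : Matrix D D ℝ) :
    bdiag bin A = A ⊙ (1 : Matrix ℕ ℕ ℝ).submatrix (bin ∘ (↑)) (bin ∘ (↑)) := by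
  ext s t
  simp [bdiag, Matrix.one_apply]

theorem Matrix.PosSemidef.bdiag {d : ℕ} {D : Finset (Pt d)} {A : Matrix D D ℝ}
    (hA : A.PosSemidef) (bin : Pt d → ℕ) : (_root_.bdiag bin A).PosSemidef :=
  bdiag_eq_hadamard bin A ▸ hA.hadamard (PosSemidef.one.submatrix _)

theorem posSemidef_re_integral_mul_conj {ι α : Type*} [Fintype ι] [MeasurableSpace α]
    {μ : Measure α} {g : ι → α → ℂ} {w : α → ℝ} (hw : ∀ x, 0 ≤ w x)
    (hg : ∀ s t, Integrable (fun x => g s x * conj (g t x) * w x) μ) :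
    (Matrix.of fun s t => (∫ x, g s x * conj (g t x) * w x ∂μ).re).PosSemidef := by
  refine .of_dotProduct_mulVec_nonneg ?_ fun v => ?_
  · ext s t
    rw [conjTranspose_apply, of_apply, of_apply, star_trivial, ← conj_re, ← integral_conj]
    congr 2 with x
    simp only [map_mul, conj_conj, conj_ofReal]
    ring
  · have hform : star v ⬝ᵥ (Matrix.of fun s t => (∫ x, g s x * conj (g t x) * w x ∂μ).re) *ᵥ v
        = ∫ x, normSq (∑ s, v s * g s x) * w x ∂μ := by
      have hint : ∀ s t, Integrable (fun x => (v s * v t : ℂ) * (g s x * conj (g t x) * w x)) μ :=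
        fun s t => (hg s t).const_mul _
      calc star v ⬝ᵥ (Matrix.of fun s t => (∫ x, g s x * conj (g t x) * w x ∂μ).re) *ᵥ v
          = ∑ s, ∑ t, (∫ x, (v s * v t : ℂ) * (g s x * conj (g t x) * w x) ∂μ).re := by
            simp only [dotProduct, mulVec, of_apply, star_trivial, Finset.mul_sum,
              integral_const_mul, ← ofReal_mul, re_ofReal_mul]
            exact Finset.sum_congr rfl fun s _ => Finset.sum_congr rfl fun t _ => by ring
        _ = (∫ x, ∑ s, ∑ t, (v s * v t : ℂ) * (g s x * conj (g t x) * w x) ∂μ).re := by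
            rw [integral_finsetSum _ fun s _ => integrable_finsetSum _ fun t _ => hint s t,
              re_sum]
            refine Finset.sum_congr rfl fun s _ => ?_
            rw [integral_finsetSum _ fun t _ => hint s t, re_sum]
        _ = (∫ x, ((normSq (∑ s, v s * g s x) * w x : ℝ) : ℂ) ∂μ).re := by
            congr 2 with x
            rw [ofReal_mul, ← mul_conj, map_sum, Finset.sum_mul, Finset.sum_mul]
            refine Finset.sum_congr rfl fun s _ => ?_
            rw [Finset.mul_sum, Finset.sum_mul]
            refine Finset.sum_congr rfl fun t _ => ?_
            simp only [map_mul, conj_ofReal]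
            ring
        _ = ∫ x, normSq (∑ s, v s * g s x) * w x ∂μ := by
            rw [integral_complex_ofReal, ofReal_re]
    rw [hform]
    exact integral_nonneg fun x => mul_nonneg (normSq_nonneg _) (hw x)

section Kernel

variable {d : ℕ} {ν : ℝ} {N : ℕ}

theorem hN_nonneg {x : ℝ} (hx : 0 ≤ x) : 0 ≤ hN d ν N x :=
  Real.rpow_nonneg (by positivity) _

theorem monotoneOn_hN (hN0 : 0 < N) (hp : 0 ≤ ν + (d : ℝ) / 2) :
    MonotoneOn (hN d ν N) (Set.Ioi 0) := by
  intro x (hx : 0 < x) y (hy : 0 < y) hxy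
  have hNx : 0 < (N : ℝ) * x := mul_pos (by exact_mod_cast hN0) hx
  have hNxy : (N : ℝ) * x ≤ N * y := by gcongr
  refine Real.rpow_le_rpow_of_nonpos (by positivity) ?_ (by linarith)
  gcongr 1 + ?_
  exact Real.rpow_le_rpow_of_nonpos hNx hNxy (by norm_num)

theorem rpow_neg_mul_rpow_neg_mul_hN_le {ρ x : ℝ} (hp : ν + (d : ℝ) / 2 ≠ 0)
    (hc : 0 < (N : ℝ) * ρ) (hx : 0 ≤ x) :
    x ^ (-(ν + (d : ℝ) / 2)) * x ^ (-(ν + (d : ℝ) / 2)) * hN d ν N (ρ * x)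
      ≤ ((N : ℝ) * ρ) ^ (2 * (ν + (d : ℝ) / 2))
        * (1 + ((N : ℝ) * ρ * x) ^ 2) ^ (-(ν + (d : ℝ) / 2)) := by
  set p := ν + (d : ℝ) / 2
  set c := (N : ℝ) * ρ
  obtain rfl | hx := hx.eq_or_lt
  · rw [Real.zero_rpow (neg_ne_zero.2 hp), zero_mul, zero_mul]
    positivity
  refine le_of_eq ?_
  have hB : x * x * (1 + (c * x) ^ (-2 : ℝ)) = (1 + (c * x) ^ 2) / c ^ 2 := by
    rw [Real.rpow_neg (by positivity), Real.rpow_two]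
    field_simp
    ring
  calc x ^ (-p) * x ^ (-p) * hN d ν N (ρ * x)
      = (x * x * (1 + (c * x) ^ (-2 : ℝ))) ^ (-p) := by
        rw [hN, ← mul_assoc, Real.mul_rpow (x := x * x) (by positivity) (by positivity),
          Real.mul_rpow hx.le hx.le]
    _ = (c ^ 2) ^ p * (1 + (c * x) ^ 2) ^ (-p) := by
        rw [hB, Real.div_rpow (by positivity) (by positivity), Real.rpow_neg (by positivity),
          Real.rpow_neg (by positivity)]
        field_simp
    _ = c ^ (2 * p) * (1 + (c * x) ^ 2) ^ (-p) := by
        rw [Real.rpow_mul hc.le]; norm_cast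

variable (d ν N) in
noncomputable def phasedFN (nb : Pt d → Finset (Pt d)) (a : Pt d → Pt d → ℝ) (s ω : Pt d) :
    ℂ :=
  exp (-(I * (inner ℝ s ω : ℝ))) * fN d ν N nb a s ω

variable {nb : Pt d → Finset (Pt d)} {a : Pt d → Pt d → ℝ}

theorem norm_phasedFN_le (s ω : Pt d) :
    ‖phasedFN d ν N nb a s ω‖ ≤ ‖ω‖ ^ (-(ν + (d : ℝ) / 2)) * ∑ t ∈ nb s, |a s t| := by
  have hexp : ∀ x : ℝ, ‖exp (I * x)‖ = 1 := fun x => by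
    rw [mul_comm]; exact norm_exp_ofReal_mul_I x
  rw [phasedFN, fN, norm_mul, ← mul_neg, ← ofReal_neg, hexp, one_mul, norm_mul, norm_real,
    Real.norm_of_nonneg (by positivity)]
  gcongr
  refine (norm_sum_le _ _).trans_eq (Finset.sum_congr rfl fun t _ => ?_)
  rw [norm_mul, hexp, mul_one, norm_real, Real.norm_eq_abs]

theorem Lmat_apply {D : Finset (Pt d)} {ρ : ℝ} (hρ : 0 < ρ) (s t : D) :
    Lmat ν N D nb a ρ s t = (∫ ω, phasedFN d ν N nb a s ω * conj (phasedFN d ν N nb a t ω)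
      * hN d ν N (ρ * ‖ω‖)).re := by
  have hscale : ρ ^ (2 * ν) * ρ ^ (-(2 * ν)) = 1 := by
    rw [← Real.rpow_add hρ, add_neg_cancel, Real.rpow_zero]
  rw [Lmat, Matrix.smul_apply, Kmat, of_apply, smul_eq_mul, ← mul_assoc, hscale, one_mul]
  congr 2 with ω
  have hphase : exp (I * (inner ℝ ((t : Pt d) - s) ω : ℝ))
      = exp (-(I * (inner ℝ (s : Pt d) ω : ℝ)))
        * conj (exp (-(I * (inner ℝ (t : Pt d) ω : ℝ)))) := by
    rw [← exp_conj, ← exp_add, inner_sub_left]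
    simp only [map_neg, map_mul, conj_I, conj_ofReal, ofReal_sub]
    ring_nf
  rw [hphase, phasedFN, phasedFN, map_mul]
  ring

theorem integrable_phasedFN_mul_conj_mul_hN (hν : 0 < ν) (hN0 : 0 < N) {ρ : ℝ} (hρ : 0 < ρ)
    (s t : Pt d) :
    Integrable (fun ω => phasedFN d ν N nb a s ω * conj (phasedFN d ν N nb a t ω)
      * hN d ν N (ρ * ‖ω‖)) := by
  set p := ν + (d : ℝ) / 2
  set c := (N : ℝ) * ρ
  have hc : 0 < c := mul_pos (by exact_mod_cast hN0) hρ
  have hmajor : Integrable (fun ω : Pt d => (1 + ‖c • ω‖ ^ 2) ^ (-(2 * p) / 2)) :=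
    (integrable_rpow_neg_one_add_norm_sq
      (by simp only [finrank_euclideanSpace_fin, p]; linarith)).comp_smul hc.ne'
  refine (hmajor.const_mul ((∑ u ∈ nb s, |a s u|) * (∑ u ∈ nb t, |a t u|) * c ^ (2 * p))).mono'
    (Measurable.aestronglyMeasurable (by unfold phasedFN fN hN; fun_prop))
    (.of_forall fun ω => ?_)
  have hCs : 0 ≤ ∑ u ∈ nb s, |a s u| := by positivity
  have hCt : 0 ≤ ∑ u ∈ nb t, |a t u| := by positivity
  have hh : 0 ≤ hN d ν N (ρ * ‖ω‖) := hN_nonneg (by positivity)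
  calc ‖phasedFN d ν N nb a s ω * conj (phasedFN d ν N nb a t ω) * hN d ν N (ρ * ‖ω‖)‖
      = ‖phasedFN d ν N nb a s ω‖ * ‖phasedFN d ν N nb a t ω‖ * hN d ν N (ρ * ‖ω‖) := by
        rw [norm_mul, norm_mul, norm_conj, norm_real, Real.norm_of_nonneg hh]
    _ ≤ (‖ω‖ ^ (-p) * ∑ u ∈ nb s, |a s u|) * (‖ω‖ ^ (-p) * ∑ u ∈ nb t, |a t u|)
          * hN d ν N (ρ * ‖ω‖) := by
        gcongr
        exacts [norm_phasedFN_le s ω, norm_phasedFN_le t ω]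
    _ = (∑ u ∈ nb s, |a s u|) * (∑ u ∈ nb t, |a t u|)
          * (‖ω‖ ^ (-p) * ‖ω‖ ^ (-p) * hN d ν N (ρ * ‖ω‖)) := by ring
    _ ≤ (∑ u ∈ nb s, |a s u|) * (∑ u ∈ nb t, |a t u|)
          * (c ^ (2 * p) * (1 + (c * ‖ω‖) ^ 2) ^ (-p)) :=
        mul_le_mul_of_nonneg_left
          (rpow_neg_mul_rpow_neg_mul_hN_le (by positivity) hc (norm_nonneg ω)) (by positivity)
    _ = _ := by
        rw [norm_smul, Real.norm_of_nonneg hc.le, neg_div, mul_div_cancel_left₀ _ two_ne_zero]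
        ring

theorem Lmat_sub_posSemidef (hν : 0 < ν) (D : Finset (Pt d)) {ρ₁ ρ₂ : ℝ} (hρ₁ : 0 < ρ₁)
    (h12 : ρ₁ ≤ ρ₂) : (Lmat ν N D nb a ρ₂ - Lmat ν N D nb a ρ₁).PosSemidef := by
  have hρ₂ : 0 < ρ₂ := hρ₁.trans_le h12
  obtain rfl | hN0 := N.eq_zero_or_pos
  · -- `h_0 ≡ 1` (as `0 ^ (-2) = 0`), so `L(ρ)` does not depend on `ρ`.
    have hconst : ∀ x, hN d ν 0 x = 1 := fun x => by
      simp [hN, Real.zero_rpow (show (-2 : ℝ) ≠ 0 by norm_num)]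
    have : Lmat ν 0 D nb a ρ₂ = Lmat ν 0 D nb a ρ₁ := by
      ext s t
      simp only [Lmat_apply hρ₁, Lmat_apply hρ₂, hconst]
    rw [this, sub_self]
    exact .zero
  have hint {ρ : ℝ} (hρ : 0 < ρ) (s t : Pt d) :=
    integrable_phasedFN_mul_conj_mul_hN (nb := nb) (a := a) hν hN0 hρ s t
  have hdiff : Lmat ν N D nb a ρ₂ - Lmat ν N D nb a ρ₁ = Matrix.of fun s t : D =>
      (∫ ω, phasedFN d ν N nb a s ω * conj (phasedFN d ν N nb a t ω)
        * (hN d ν N (ρ₂ * ‖ω‖) - hN d ν N (ρ₁ * ‖ω‖) : ℝ)).re := by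
    ext s t
    rw [Matrix.sub_apply, of_apply, Lmat_apply hρ₂, Lmat_apply hρ₁, ← sub_re,
      ← integral_sub (hint hρ₂ s t) (hint hρ₁ s t)]
    congr 2 with ω
    push_cast
    ring
  rw [hdiff]
  refine posSemidef_re_integral_mul_conj (fun ω => sub_nonneg.2 ?_) fun s t => ?_
  · obtain hω | hω := (norm_nonneg ω).eq_or_lt
    · simp [← hω]
    · exact monotoneOn_hN hN0 (by positivity) (mul_pos hρ₁ hω) (mul_pos hρ₂ hω)
        (by gcongr)
  · refine ((hint hρ₂ s t).sub (hint hρ₁ s t)).congr (.of_forall fun ω => ?_)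
    simp only [Pi.sub_apply, ofReal_sub]
    ring

end Kernel

theorem stmt7_general (d n : ℕ) (ν : ℝ) (Θ₀ : Set ℝ)
    (D : Finset (Pt d)) (nb : Pt d → Finset (Pt d)) (a : Pt d → Pt d → ℝ) (bin : Pt d → ℕ)
    (hν : 0 < ν)
    (hΘ0 : Θ₀ ⊆ Set.Ioi 0) :
    ∀ ρ₁ ∈ Θ₀, ∀ ρ₂ ∈ Θ₀, ρ₁ ≤ ρ₂ →
      (LmatB ν (Nof d n) D nb a bin ρ₂ - LmatB ν (Nof d n) D nb a bin ρ₁).PosSemidef := by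
  intro ρ₁ hρ₁ ρ₂ _ h12
  rw [LmatB, LmatB, ← bdiag_sub]
  exact (Lmat_sub_posSemidef hν D (hΘ0 hρ₁) h12).bdiag bin

/-- **Monotonicity claim (Eq. (B.8) in the proof of Lemma B.3).**  For `ρ₁ ≤ ρ₂` in `Θ₀` and any
partition of `Dₙ` (encoded by a labelling `bin`), the matrix
`Δ^B(ρ₁,ρ₂) = L^B_{n,m}(ρ₂) - L^B_{n,m}(ρ₁)` is symmetric positive semidefinite; i.e.
`ρ ↦ L^B_{n,m}(ρ)` is nondecreasing on `Θ₀` in the Loewner order. -/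
theorem stmt7 (d m n : ℕ) (ν c₀ : ℝ) (Θ₀ : Set ℝ)
    (D : Finset (Pt d)) (nb : Pt d → Finset (Pt d)) (a : Pt d → Pt d → ℝ) (bin : Pt d → ℕ)
    (hd : 1 ≤ d) (hν : 0 < ν) (hm : ν + (d : ℝ) / 2 ≤ (m : ℝ)) (hc₀ : 0 < c₀)
    (hΘ : IsCompact Θ₀) (hΘ0 : Θ₀ ⊆ Set.Ioi 0)
    (hD : D.card = n)
    (hPC : PrecondCoeffs d m c₀ (Nof d n) D nb a) :
    ∀ ρ₁ ∈ Θ₀, ∀ ρ₂ ∈ Θ₀, ρ₁ ≤ ρ₂ →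
      (LmatB ν (Nof d n) D nb a bin ρ₂ - LmatB ν (Nof d n) D nb a bin ρ₁).PosSemidef :=
  stmt7_general d n ν Θ₀ D nb a bin hν hΘ0
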